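/- For each t ∈ [1,n], the boxes of T(∞) carrying the entry t form a profile staircase: there is a consecutive interval of columns, beginning with the column containing b(t), such that t occurs exactly once in each of these columns and in no other column, and the row indices of these occurrences weakly increase from each column to the next, increasing by at most one at each step, starting from the row of b(t). In particular, if t occurs in column C_u of T and in column C_v of T(∞), then t occurs in every column C_i with u ≤ i ≤ v of T(∞). -/

import Mathlib

open scoped Classical

/-- height of column `j` of the diagram (columns numbered from 1). -/
def hgt (c : List ℕ) (j : ℕ) : ℕ := c.getD (j - 1) 0

/-- number of boxes in the columns strictly to the left of column `j`. -/
def off (c : List ℕ) (j : ℕ) : ℕ := (c.take (j - 1)).sum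

/-- `(i, j)` (row `i`, column `j`) is a box of the diagram `D`. -/
def IsBox (c : List ℕ) (i j : ℕ) : Prop :=
  1 ≤ j ∧ j ≤ c.length ∧ 1 ≤ i ∧ i ≤ hgt c j

/-- the entry of the box `(i, j)` in the tableau `T`. -/
def Tentry (c : List ℕ) (i j : ℕ) : ℕ := off c j + i

/-- the column of the box of `D` carrying entry `m` in `T`. -/
noncomputable def colOf (c : List ℕ) (m : ℕ) : ℕ := sInf {j | m ≤ (c.take j).sum}

/-- the row of the box of `D` carrying entry `m` in `T`. -/
noncomputable def rowOf (c : List ℕ) (m : ℕ) : ℕ := m - off c (colOf c m)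

/-- the total order `≼` on entries: increasing down columns, then from right to left. -/
def ple (c : List ℕ) (a b : ℕ) : Prop :=
  colOf c b < colOf c a ∨ (colOf c a = colOf c b ∧ a ≤ b)

/-- the strict version of `≼`. -/
def plt (c : List ℕ) (a b : ℕ) : Prop :=
  colOf c b < colOf c a ∨ (colOf c a = colOf c b ∧ a < b)

/-- column `j` has a left neighbour in `D`. -/
def HasLeftNb (c : List ℕ) (j : ℕ) : Prop :=
  ∃ i, 1 ≤ i ∧ i < j ∧ hgt c i = hgt c j ∧
    ∀ i', i < i' → i' < j → hgt c i' ≠ hgt c j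

/-- the `j`-th column of the tableau `T`, rows to optional entries. -/
def Tcol (c : List ℕ) (j : ℕ) : ℕ → Option ℕ := fun i =>
  if 1 ≤ i ∧ i ≤ hgt c j then some (Tentry c i j) else none

/-- one step of the propagation rule building `T(∞)`: the entry (if any) in row `t`
of column `j - 1` of `T(∞)` (given by `prev`) is propagated into the partially
built column `j` (given by `cur`). -/
noncomputable def propStep (c : List ℕ) (j : ℕ) (prev : ℕ → Option ℕ)
    (cur : ℕ → Option ℕ) (t : ℕ) : ℕ → Option ℕ :=
  match prev t with
  | none => cur
  | some l =>
    if hgt c j = t then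
      if HasLeftNb c j ∧ cur (t + 1) = none then
        Function.update cur (t + 1) (some l)
      else cur
    else
      if cur t = none then Function.update cur t (some l) else cur

/-- the `j`-th column of the composition tableau `T(∞)`. -/
noncomputable def TinfCol (c : List ℕ) : ℕ → ℕ → Option ℕ
  | 0 => fun _ => none
  | 1 => Tcol c 1
  | j + 2 =>
      (List.range (c.sum + 2)).foldl
        (propStep c (j + 2) (TinfCol c (j + 1))) (Tcol c (j + 2))

/-- labels of lines: `1` or `∗`. -/
inductive Lab : Type
  | one : Lab
  | star : Lab
deriving DecidableEq

/-- maximal height among the columns `1, …, j - 1`. -/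
def maxHgt (c : List ℕ) (j : ℕ) : ℕ := (c.take (j - 1)).foldr max 0

/-- the maximal column height of the diagram `D`. -/
def maxH (c : List ℕ) : ℕ := c.foldr max 0

/-- `LineB c a i j lab` : the line family `ℓ(D)` contains a line labelled `lab`
whose left end-point is the box of `D` carrying entry `a` in `T` and whose right
end-point is the box `(i, j)` (row `i` of column `C_j`). -/
def LineB (c : List ℕ) (a i j : ℕ) (lab : Lab) : Prop :=
  2 ≤ j ∧ j ≤ c.length ∧ 1 ≤ i ∧
    (match lab with
     | Lab.one =>
         (maxHgt c j < hgt c j ∧ i ≤ maxHgt c j + 1 ∧ TinfCol c (j - 1) i = some a)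
       ∨ (hgt c j ≤ maxHgt c j ∧ i + 1 ≤ hgt c j ∧ TinfCol c (j - 1) i = some a)
       ∨ (hgt c j ≤ maxHgt c j ∧ i = hgt c j ∧
           ¬(∃ j', 1 ≤ j' ∧ j' < j ∧ hgt c j' = hgt c j) ∧
           TinfCol c (j - 1) i = some a)
       ∨ (hgt c j ≤ maxHgt c j ∧ i = hgt c j ∧
           (∃ j', 1 ≤ j' ∧ j' < j ∧ hgt c j' = hgt c j) ∧
           TinfCol c (j - 1) (i + 1) = some a)
     | Lab.star =>
         hgt c j ≤ maxHgt c j ∧ i = hgt c j ∧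
           (∃ j', 1 ≤ j' ∧ j' < j ∧ hgt c j' = hgt c j) ∧
           TinfCol c (j - 1) i = some a)

/-- `LineE c a b lab` : `ℓ(D)` contains a line labelled `lab` joining the box of `D`
carrying entry `a` in `T` (on the left) to the box carrying entry `b` (on the right). -/
def LineE (c : List ℕ) (a b : ℕ) (lab : Lab) : Prop :=
  ∃ i j, LineB c a i j lab ∧ b = Tentry c i j

/-- the box `(i, j)` of `D` is right extremal relative to `ℓ(D)`. -/
def RExt (c : List ℕ) (i j : ℕ) : Prop :=
  IsBox c i j ∧ ∀ i' j', ¬ LineB c (Tentry c i j) i' j' Lab.one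

/-- `c` is a composition of `n`. -/
def IsComposition (c : List ℕ) (n : ℕ) : Prop :=
  c.sum = n ∧ ∀ x ∈ c, 0 < x

/-!
Each column of `T(∞)` arises from the previous one by an explicit rule (`colStep`): rows
`1, …, h` carry the entries of `T`, row `h + 1` receives the entry of row `h` or of row `h + 1`
of the previous column, and every lower row copies the previous column. Hence every entry of
column `j` is at most the number of boxes in columns `1, …, j`, no entry occurs twice in a column,
and an entry of `T` from an earlier column that occurs in column `j + 1` sits in the same row as,
or one row below, its occurrence in column `j`. The entry `t` first appears in its own column
`colOf c t`, at row `rowOf c t`, so the columns containing it form an interval starting there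
and its rows form a staircase.
-/

theorem sum_take_succ_eq_add_hgt (c : List ℕ) (j : ℕ) :
    (c.take (j + 1)).sum = (c.take j).sum + hgt c (j + 1) := by
  rcases lt_or_ge j c.length with hj | hj
  · simp [List.sum_take_succ c j hj, hgt, List.getD_eq_getElem?_getD, hj]
  · simp [List.take_of_length_le, hj, hgt, show c.length ≤ j + 1 by omega]

theorem off_succ (c : List ℕ) (j : ℕ) : off c (j + 1) = (c.take j).sum := rfl

section

variable {c : List ℕ}

/-- Column `j` of `T(∞)` once the rows `0, …, m - 1` of the previous column `prev` have been
propagated into it. -/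
noncomputable def colStep (c : List ℕ) (j : ℕ) (prev : ℕ → Option ℕ) (m i : ℕ) : Option ℕ :=
  if 1 ≤ i ∧ i ≤ hgt c j then some (Tentry c i j)
  else if i = hgt c j + 1 ∧ hgt c j < m then
    if HasLeftNb c j ∧ prev (hgt c j) ≠ none then prev (hgt c j)
    else if hgt c j + 1 < m then prev (hgt c j + 1) else none
  else if hgt c j + 2 ≤ i ∧ i < m then prev i
  else none

theorem colStep_zero (j : ℕ) (prev : ℕ → Option ℕ) : colStep c j prev 0 = Tcol c j := by
  funext i
  simp [colStep, Tcol]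

theorem propStep_colStep {j : ℕ} {prev : ℕ → Option ℕ} (h0 : prev 0 = none) (m : ℕ) :
    propStep c j prev (colStep c j prev m) m = colStep c j prev (m + 1) := by
  cases hm : prev m with
  | none =>
    funext i
    simp only [propStep, hm, colStep]
    grind
  | some l =>
    simp only [propStep, hm]
    split_ifs <;> funext i <;> simp only [Function.update_apply, colStep] at * <;> grind

theorem foldl_propStep_eq_colStep {j : ℕ} {prev : ℕ → Option ℕ} (h0 : prev 0 = none) (m : ℕ) :
    (List.range m).foldl (propStep c j prev) (Tcol c j) = colStep c j prev m := by
  induction m with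
  | zero => exact (colStep_zero j prev).symm
  | succ m ih =>
    rw [List.range_succ, List.foldl_append, ih, List.foldl_cons, List.foldl_nil]
    exact propStep_colStep h0 m

theorem TinfCol_row_zero (c : List ℕ) : ∀ j, TinfCol c j 0 = none
  | 0 => rfl
  | 1 => by simp [TinfCol, Tcol]
  | j + 2 => by
    rw [TinfCol, foldl_propStep_eq_colStep (TinfCol_row_zero c (j + 1))]
    simp [colStep]

theorem TinfCol_succ (j : ℕ) :
    TinfCol c (j + 1) = colStep c (j + 1) (TinfCol c j) (c.sum + 2) := by
  cases j with
  | zero => funext i; simp [TinfCol, Tcol, colStep]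
  | succ j => rw [TinfCol, foldl_propStep_eq_colStep (TinfCol_row_zero c (j + 1))]

theorem TinfCol_succ_of_le_hgt {j i : ℕ} (h1 : 1 ≤ i) (h2 : i ≤ hgt c (j + 1)) :
    TinfCol c (j + 1) i = some (Tentry c i (j + 1)) := by
  rw [TinfCol_succ, colStep, if_pos ⟨h1, h2⟩]

theorem TinfCol_succ_eq_some {j i a : ℕ} (h : TinfCol c (j + 1) i = some a) :
    (1 ≤ i ∧ i ≤ hgt c (j + 1) ∧ a = Tentry c i (j + 1)) ∨
      (hgt c (j + 1) < i ∧ ∃ ρ, TinfCol c j ρ = some a ∧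
        (ρ = i ∨ (ρ = hgt c (j + 1) ∧ i = ρ + 1))) := by
  rw [TinfCol_succ, colStep] at h
  split_ifs at h <;> grind

theorem le_sum_take_of_TinfCol_eq_some {j i a : ℕ} (h : TinfCol c j i = some a) :
    a ≤ (c.take j).sum := by
  induction j generalizing i with
  | zero => simp [TinfCol] at h
  | succ j ih =>
    rw [sum_take_succ_eq_add_hgt]
    rcases TinfCol_succ_eq_some h with ⟨-, hi, rfl⟩ | ⟨-, ρ, hρ, -⟩
    · exact Nat.add_le_add_left hi _
    · exact (ih hρ).trans (Nat.le_add_right _ _)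

theorem TinfCol_row_unique {j i i' a : ℕ} (h : TinfCol c j i = some a)
    (h' : TinfCol c j i' = some a) : i = i' := by
  induction j generalizing i i' with
  | zero => simp [TinfCol] at h
  | succ j ih =>
    -- entries of `T` in column `j + 1` exceed every entry of column `j`
    rcases TinfCol_succ_eq_some h with ⟨hi, -, rfl⟩ | ⟨hi, ρ, hρ, hρi⟩ <;>
      rcases TinfCol_succ_eq_some h' with ⟨hi', -, ha⟩ | ⟨hi', ρ', hρ', hρi'⟩
    · simp only [Tentry, off_succ] at ha; omega
    · have := le_sum_take_of_TinfCol_eq_some hρ'; simp only [Tentry, off_succ] at this; omega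
    · have := le_sum_take_of_TinfCol_eq_some hρ; simp only [Tentry, off_succ] at ha; omega
    · have := ih hρ hρ'; omega

theorem exists_TinfCol_pred {j i a : ℕ} (ha : a ≤ (c.take j).sum)
    (h : TinfCol c (j + 1) i = some a) : ∃ ρ, TinfCol c j ρ = some a ∧ (i = ρ ∨ i = ρ + 1) := by
  rcases TinfCol_succ_eq_some h with ⟨hi, -, rfl⟩ | ⟨-, ρ, hρ, hρi⟩
  · simp only [Tentry, off_succ] at ha; omega
  · exact ⟨ρ, hρ, by omega⟩


/-- The row of column `j` of `T(∞)` carrying `a` (junk value `0` if `a` does not occur there). -/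
noncomputable def TinfRow (c : List ℕ) (j a : ℕ) : ℕ := sInf {i | TinfCol c j i = some a}

theorem TinfCol_eq_some_iff_eq_TinfRow {j i a : ℕ} (h : ∃ i, TinfCol c j i = some a) :
    TinfCol c j i = some a ↔ i = TinfRow c j a := by
  have hrow : TinfCol c j (TinfRow c j a) = some a := Nat.sInf_mem h
  exact ⟨fun hi => TinfCol_row_unique hi hrow, fun hi => hi ▸ hrow⟩

variable {t : ℕ}

theorem colOf_le_length (ht : t ≤ c.sum) : colOf c t ≤ c.length :=
  Nat.sInf_le (show c.length ∈ {j | t ≤ (c.take j).sum} by simpa using ht)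

theorem le_sum_take_of_colOf_le {j : ℕ} (ht : t ≤ c.sum) (hj : colOf c t ≤ j) :
    t ≤ (c.take j).sum :=
  (Nat.sInf_mem (s := {j | t ≤ (c.take j).sum}) ⟨c.length, by simpa using ht⟩).trans
    (List.monotone_sum_take c hj)

theorem sum_take_lt_of_lt_colOf {j : ℕ} (hj : j < colOf c t) : (c.take j).sum < t :=
  not_le.1 fun h => Nat.notMem_of_lt_sInf (s := {j | t ≤ (c.take j).sum}) hj h

theorem TinfCol_ne_some_of_lt_colOf {j i : ℕ} (hj : j < colOf c t) : TinfCol c j i ≠ some t :=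
  fun h => (le_sum_take_of_TinfCol_eq_some h).not_gt (sum_take_lt_of_lt_colOf hj)

theorem TinfCol_colOf_eq_some_iff {i : ℕ} (ht1 : 1 ≤ t) (ht : t ≤ c.sum) :
    TinfCol c (colOf c t) i = some t ↔ i = rowOf c t := by
  obtain ⟨k, hk⟩ : ∃ k, colOf c t = k + 1 := by
    refine Nat.exists_eq_add_one.2 (Nat.pos_of_ne_zero fun h0 => ?_)
    have := le_sum_take_of_colOf_le ht le_rfl
    simp [h0] at this
    omega
  have hlt : (c.take k).sum < t := sum_take_lt_of_lt_colOf (by omega)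
  have hle : t ≤ (c.take k).sum + hgt c (k + 1) := by
    rw [← sum_take_succ_eq_add_hgt]; exact le_sum_take_of_colOf_le ht hk.le
  have hrow : rowOf c t = t - (c.take k).sum := by rw [rowOf, hk, off_succ]
  have hmem : TinfCol c (colOf c t) (rowOf c t) = some t := by
    rw [hk, TinfCol_succ_of_le_hgt (by omega) (by omega), Tentry, off_succ, hrow]
    congr 1
    omega
  exact ⟨fun h => TinfCol_row_unique h hmem, fun h => h ▸ hmem⟩

theorem exists_TinfCol_of_colOf_le {j k : ℕ} (ht : t ≤ c.sum) (hj : colOf c t ≤ j) (hjk : j ≤ k)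
    (h : ∃ i, TinfCol c k i = some t) : ∃ i, TinfCol c j i = some t := by
  induction hjk with
  | refl => exact h
  | step hjk ih =>
    obtain ⟨i, hi⟩ := h
    obtain ⟨ρ, hρ, -⟩ := exists_TinfCol_pred (le_sum_take_of_colOf_le ht (hj.trans hjk)) hi
    exact ih ⟨ρ, hρ⟩

end

theorem statement2_general (n : ℕ) (c : List ℕ) (hc : IsComposition c n) :
    ∀ t, 1 ≤ t → t ≤ n →
      ∃ (v : ℕ) (r : ℕ → ℕ), colOf c t ≤ v ∧ v ≤ c.length ∧
        (∀ j, 1 ≤ j → j ≤ c.length →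
          ((∃ i, TinfCol c j i = some t) ↔ colOf c t ≤ j ∧ j ≤ v)) ∧
        (∀ j, colOf c t ≤ j → j ≤ v → ∀ i, (TinfCol c j i = some t ↔ i = r j)) ∧
        r (colOf c t) = rowOf c t ∧
        (∀ j, colOf c t ≤ j → j < v → r j ≤ r (j + 1) ∧ r (j + 1) ≤ r j + 1) := by
  obtain ⟨rfl, -⟩ := hc
  intro t ht1 ht
  have hu : ∃ i, TinfCol c (colOf c t) i = some t := ⟨_, (TinfCol_colOf_eq_some_iff ht1 ht).2 rfl⟩
  set v := Nat.findGreatest (fun j => ∃ i, TinfCol c j i = some t) c.length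
  have hv : ∃ i, TinfCol c v i = some t :=
    Nat.findGreatest_spec (P := fun j => ∃ i, TinfCol c j i = some t) (colOf_le_length ht) hu
  have huv : colOf c t ≤ v := Nat.le_findGreatest (colOf_le_length ht) hu
  have hocc : ∀ j, colOf c t ≤ j → j ≤ v → ∃ i, TinfCol c j i = some t :=
    fun j hj hjv => exists_TinfCol_of_colOf_le ht hj hjv hv
  have hrow : ∀ j, colOf c t ≤ j → j ≤ v → ∀ i, TinfCol c j i = some t ↔ i = TinfRow c j t :=
    fun j hj hjv i => TinfCol_eq_some_iff_eq_TinfRow (hocc j hj hjv)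
  refine ⟨v, fun j => TinfRow c j t, huv, Nat.findGreatest_le _, fun j _ hjl => ⟨?_, ?_⟩, hrow,
    ?_, ?_⟩
  · rintro ⟨i, hi⟩
    exact ⟨not_lt.1 fun hj => TinfCol_ne_some_of_lt_colOf hj hi,
      Nat.le_findGreatest hjl ⟨i, hi⟩⟩
  · exact fun ⟨hj, hjv⟩ => hocc j hj hjv
  · exact ((hrow _ le_rfl huv _).1 ((TinfCol_colOf_eq_some_iff ht1 ht).2 rfl)).symm
  · intro j hj hjv
    have hsucc := (hrow (j + 1) (by omega) hjv _).2 rfl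
    obtain ⟨ρ, hρ, hstep⟩ := exists_TinfCol_pred (le_sum_take_of_colOf_le ht hj) hsucc
    rw [(hrow j hj hjv.le ρ).1 hρ] at hstep
    beta_reduce
    omega

/-- for each `t ∈ [1, n]` the boxes of `T(∞)` carrying the entry `t`
form a profile staircase: a consecutive interval of columns starting at the column
of `b(t)`, with exactly one occurrence in each of those columns and in no others,
the row indices weakly increasing by at most one at each step, starting from the
row of `b(t)`.  In particular if `t` occurs in column `C_u` of `T` and in column
`C_v` of `T(∞)`, then it occurs in every column `C_i`, `u ≤ i ≤ v`, of `T(∞)`. -/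
theorem statement2 (n : ℕ) (hn : 0 < n) (c : List ℕ) (hc : IsComposition c n) :
    ∀ t, 1 ≤ t → t ≤ n →
      ∃ (v : ℕ) (r : ℕ → ℕ), colOf c t ≤ v ∧ v ≤ c.length ∧
        (∀ j, 1 ≤ j → j ≤ c.length →
          ((∃ i, TinfCol c j i = some t) ↔ colOf c t ≤ j ∧ j ≤ v)) ∧
        (∀ j, colOf c t ≤ j → j ≤ v → ∀ i, (TinfCol c j i = some t ↔ i = r j)) ∧
        r (colOf c t) = rowOf c t ∧
        (∀ j, colOf c t ≤ j → j < v → r j ≤ r (j + 1) ∧ r (j + 1) ≤ r j + 1) :=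
  statement2_general n c hc
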